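/- Let X be a metric space of bounded geometry. Then X has Property A if and only if X is large scale paracompact. -/

import Mathlib

/-!
Property A says exactly that for every scale `R` and `ε > 0` there is a map `f : X → Δ(S)` with
uniformly bounded stars and `d(f x, f y) < ε` whenever `d(x, y) ≤ R` (the coordinates of `f` are
the functions `φ_s`). Since `Δ(S)` has diameter `2`, such a map with `ε = C / 2` at scale `2 / λ`
is `(λ, C)`-Lipschitz, and a `(λ, C)`-Lipschitz map with `λ R + C < ε` varies by less than `ε` at
scale `R`. Applied to the cover of `X` by points, large scale paracompactness thus gives Property A.
Conversely, given a uniformly bounded cover `U`, bounded geometry puts each point in only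
finitely many members of `U`, so the uniform distribution on them is a map `g : X → Δ(Set X)` whose
star at `U i` is `U i`. For small `t > 0` the map `x ↦ (1 - t) f x ⊕ t g x` into `Δ(S ⊕ Set X)`
still has small variation and bounded stars, and each `U i` lies in its star at `U i`.
-/

open Function Metric ENNReal

noncomputable section

/-- `ℓ¹(S)`: real-valued functions on `S` with finite `ℓ¹`-norm, with the `ℓ¹` metric. -/
abbrev ellOne (S : Type u) : Type u := lp (fun _ : S => ℝ) 1

/-- The full simplex `Δ(S) ⊆ ℓ¹(S)`. -/
def fullSimplex (S : Type u) : Set (ellOne S) :=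
  {p | (∀ s, 0 ≤ p s) ∧ (support (p : S → ℝ)).Finite ∧ ∑' s, p s = 1}

/-- The `n`-skeleton `Δ(S)^(n)` of the full simplex. -/
def skeleton (S : Type u) (n : ℕ) : Set (ellOne S) :=
  {p ∈ fullSimplex S | (support (p : S → ℝ)).encard ≤ n + 1}

/-- A simplicial complex on `S`: a subset of `Δ(S)` closed under passing to
points whose support is contained in the support of a member. -/
def IsSimplicialComplex {S : Type u} (K : Set (ellOne S)) : Prop :=
  K ⊆ fullSimplex S ∧
    ∀ p ∈ K, ∀ q ∈ fullSimplex S,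
      support (q : S → ℝ) ⊆ support (p : S → ℝ) → q ∈ K

/-- The star of a vertex `v` in `K`. -/
def star {S : Type u} (K : Set (ellOne S)) (v : S) : Set (ellOne S) :=
  {p ∈ K | 0 < p v}

/-- `f` is `(λ, C)`-Lipschitz. -/
def IsLipschitzLC {X Y : Type*} [MetricSpace X] [MetricSpace Y]
    (l C : ℝ) (f : X → Y) : Prop :=
  ∀ x y, dist (f x) (f y) ≤ l * dist x y + C

/-- A family of sets is uniformly bounded. -/
def UniformlyBounded {X : Type*} [MetricSpace X] {ι : Type*} (U : ι → Set X) : Prop :=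
  ∃ M : ℝ, ∀ i, ∀ x ∈ U i, ∀ y ∈ U i, dist x y ≤ M

/-- `U` is a cover of the whole space. -/
def IsCover {X : Type*} {ι : Type*} (U : ι → Set X) : Prop := ∀ x, ∃ i, x ∈ U i

/-- The Lebesgue number `inf_x sup_i dist(x, X∖Uᵢ)` of a family, as a value in `ℝ≥0∞`. -/
def lebesgue {X : Type*} [MetricSpace X] {ι : Type*} (U : ι → Set X) : ℝ≥0∞ :=
  ⨅ x : X, ⨆ i, EMetric.infEdist x (U i)ᶜ

/-- The multiplicity of `U` is at most `m`. -/
def MultiplicityLE {X : Type*} [MetricSpace X] {ι : Type*} (U : ι → Set X) (m : ℕ) : Prop :=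
  ∀ x : X, {i | 0 < Metric.infDist x ((U i)ᶜ)}.encard ≤ m

/-- `f : X → K` is a `δ`-partition of unity. -/
def IsDeltaPartitionOfUnity {X : Type*} [MetricSpace X] {S : Type u}
    (δ : ℝ) (K : Set (ellOne S)) (f : X → ellOne S) : Prop :=
  (∀ x, f x ∈ K) ∧ IsLipschitzLC δ δ f ∧
    UniformlyBounded (fun v : S => f ⁻¹' star K v) ∧
    ENNReal.ofReal (1 / δ) ≤ lebesgue (fun v : S => f ⁻¹' star K v)

/-- `X` is large scale paracompact. -/
def LSParacompact (X : Type u) [MetricSpace X] : Prop :=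
  ∀ (ι : Type u) (U : ι → Set X), IsCover U → UniformlyBounded U →
    ∀ l C : ℝ, 0 < l → 0 < C →
      ∃ (S : Type u) (K : Set (ellOne S)) (f : X → ellOne S),
        IsSimplicialComplex K ∧ (∀ x, f x ∈ K) ∧ IsLipschitzLC l C f ∧
        UniformlyBounded (fun v : S => f ⁻¹' star K v) ∧
        ∀ i, ∃ v : S, U i ⊆ f ⁻¹' star K v

/-- `X` has asymptotic dimension at most `n`. -/
def AsdimLE (X : Type u) [MetricSpace X] (n : ℕ) : Prop :=
  ∀ R : ℝ, 0 < R → ∃ (ι : Type u) (U : ι → Set X),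
    IsCover U ∧ UniformlyBounded U ∧ MultiplicityLE U (n + 1) ∧
    ENNReal.ofReal R ≤ lebesgue U

/-- `X` has Property A. -/
def PropertyA (X : Type u) [MetricSpace X] : Prop :=
  ∀ R ε : ℝ, 0 < R → 0 < ε →
    ∃ (M : ℝ) (S : Type u) (φ : S → X → ℝ), 0 < M ∧
      (∀ s x, 0 ≤ φ s x ∧ φ s x ≤ 1) ∧
      (∀ x, (support fun s => φ s x).Finite) ∧
      (∀ x, ∑' s, φ s x = 1) ∧
      (∀ x y, dist x y ≤ R → ∑' s, |φ s x - φ s y| < ε) ∧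
      (∀ s, ∀ x ∈ support (φ s), ∀ y ∈ support (φ s), dist x y ≤ M)

/-- `f` has `(R, ε)` variation. -/
def HasVariation {X Y : Type*} [MetricSpace X] [MetricSpace Y] (R ε : ℝ) (f : X → Y) : Prop :=
  ∀ x y, dist x y ≤ R → dist (f x) (f y) < ε

/-- `g` is a coarse embedding. -/
def CoarseEmbedding {X Y : Type*} [MetricSpace X] [MetricSpace Y] (g : X → Y) : Prop :=
  ∃ ρminus ρplus : ℝ → ℝ, Monotone ρminus ∧ Monotone ρplus ∧
    Filter.Tendsto ρminus Filter.atTop Filter.atTop ∧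
    ∀ x y, ρminus (dist x y) ≤ dist (g x) (g y) ∧ dist (g x) (g y) ≤ ρplus (dist x y)

/-- `X` has bounded geometry: balls of any fixed radius have uniformly bounded cardinality. -/
def BoundedGeometry (X : Type*) [MetricSpace X] : Prop :=
  ∀ r : ℝ, 0 < r → ∃ N : ℕ, ∀ x : X, (Metric.ball x r).encard ≤ N

namespace ellOne

variable {S T : Type u}

def ofFinite (f : S → ℝ) (hf : (support f).Finite) : ellOne S :=
  ⟨f, (memℓp_zero hf).of_exponent_ge zero_le⟩

@[simp]
lemma ofFinite_apply (f : S → ℝ) (hf : (support f).Finite) (s : S) : ofFinite f hf s = f s :=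
  rfl

lemma summable_abs (p : ellOne S) : Summable fun s => |p s| := by
  simpa using (lp.memℓp p).summable (by norm_num)

lemma norm_eq_tsum (p : ellOne S) : ‖p‖ = ∑' s, |p s| := by
  rw [lp.norm_eq_tsum_rpow (by norm_num)]
  simp

lemma dist_eq_tsum (p q : ellOne S) : dist p q = ∑' s, |p s - q s| := by
  rw [dist_eq_norm, norm_eq_tsum]
  rfl

lemma tsum_eq_norm_of_nonneg {p : ellOne S} (hp : ∀ s, 0 ≤ p s) : ∑' s, p s = ‖p‖ := by
  rw [norm_eq_tsum]
  exact tsum_congr fun s => (abs_of_nonneg (hp s)).symm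

def sumElim (p : ellOne S) (q : ellOne T) : ellOne (S ⊕ T) :=
  ⟨Sum.elim p q, memℓp_gen <| by
    simpa using Summable.sum (fun v => |Sum.elim p q v|) (summable_abs p) (summable_abs q)⟩

@[simp]
lemma sumElim_inl (p : ellOne S) (q : ellOne T) (s : S) : sumElim p q (.inl s) = p s :=
  rfl

@[simp]
lemma sumElim_inr (p : ellOne S) (q : ellOne T) (t : T) : sumElim p q (.inr t) = q t :=
  rfl

lemma norm_sumElim (p : ellOne S) (q : ellOne T) : ‖sumElim p q‖ = ‖p‖ + ‖q‖ := by
  rw [norm_eq_tsum, norm_eq_tsum, norm_eq_tsum,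
    Summable.tsum_sum (f := fun v => |sumElim p q v|) (summable_abs p) (summable_abs q)]
  rfl

lemma sumElim_sub_sumElim (p p' : ellOne S) (q q' : ellOne T) :
    sumElim p q - sumElim p' q' = sumElim (p - p') (q - q') := by
  ext (s | t) <;> rfl

lemma dist_sumElim (p p' : ellOne S) (q q' : ellOne T) :
    dist (sumElim p q) (sumElim p' q') = dist p p' + dist q q' := by
  rw [dist_eq_norm, sumElim_sub_sumElim, norm_sumElim, dist_eq_norm, dist_eq_norm]

end ellOne

open ellOne

section fullSimplex

variable {S T : Type u} {p : ellOne S}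

lemma norm_eq_one_of_mem_fullSimplex (hp : p ∈ fullSimplex S) : ‖p‖ = 1 := by
  rw [← tsum_eq_norm_of_nonneg hp.1, hp.2.2]

lemma apply_le_one_of_mem_fullSimplex (hp : p ∈ fullSimplex S) (s : S) : p s ≤ 1 :=
  calc p s ≤ ‖p s‖ := le_abs_self _
    _ ≤ ‖p‖ := lp.norm_apply_le_norm one_ne_zero p s
    _ = 1 := norm_eq_one_of_mem_fullSimplex hp

lemma dist_le_two_of_mem_fullSimplex {q : ellOne S} (hp : p ∈ fullSimplex S)
    (hq : q ∈ fullSimplex S) : dist p q ≤ 2 := by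
  rw [dist_eq_norm]
  linarith [norm_sub_le p q, norm_eq_one_of_mem_fullSimplex hp, norm_eq_one_of_mem_fullSimplex hq]

lemma isSimplicialComplex_fullSimplex : IsSimplicialComplex (fullSimplex S) :=
  ⟨subset_rfl, fun _ _ _ hq _ => hq⟩

lemma preimage_star_eq {X : Type*} {K : Set (ellOne S)} {f : X → ellOne S} (hf : ∀ x, f x ∈ K)
    (v : S) : f ⁻¹' star K v = {x | 0 < f x v} := by
  ext x
  exact and_iff_right (hf x)

lemma exists_mem_fullSimplex_pos_iff {F : Set T} (hF : F.Finite) (hne : F.Nonempty) :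
    ∃ p ∈ fullSimplex T, ∀ t, 0 < p t ↔ t ∈ F := by
  classical
  set c : ℝ := (hF.toFinset.card : ℝ)⁻¹
  have hc : 0 < c := by simpa [c] using hne
  have hsupp : support (F.indicator fun _ => c) ⊆ F := Set.support_indicator_subset
  refine ⟨ofFinite _ (hF.subset hsupp), ⟨fun t => Set.indicator_nonneg (fun _ _ => hc.le) t,
    hF.subset hsupp, ?_⟩, fun t => ?_⟩
  · simp only [ofFinite_apply]
    rw [tsum_eq_sum (s := hF.toFinset) fun t ht => Set.indicator_of_notMem (by simpa using ht) _,
      Finset.sum_congr rfl fun t ht => Set.indicator_of_mem (hF.mem_toFinset.1 ht) _,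
      Finset.sum_const, nsmul_eq_mul, mul_inv_cancel₀ (inv_pos.1 hc).ne']
  · by_cases ht : t ∈ F <;> simp [ht, hc]

lemma sumElim_smul_mem_fullSimplex {q : ellOne T} (hp : p ∈ fullSimplex S)
    (hq : q ∈ fullSimplex T) {t : ℝ} (ht0 : 0 ≤ t) (ht1 : t ≤ 1) :
    sumElim ((1 - t) • p) (t • q) ∈ fullSimplex (S ⊕ T) := by
  have hnonneg : ∀ v, 0 ≤ sumElim ((1 - t) • p) (t • q) v := by
    rintro (s | s)
    · exact mul_nonneg (by linarith) (hp.1 s)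
    · exact mul_nonneg ht0 (hq.1 s)
  refine ⟨hnonneg, ?_, ?_⟩
  · refine ((hp.2.1.image Sum.inl).union (hq.2.1.image Sum.inr)).subset ?_
    rintro (s | s) hs
    · exact .inl ⟨s, right_ne_zero_of_mul hs, rfl⟩
    · exact .inr ⟨s, right_ne_zero_of_mul hs, rfl⟩
  · rw [tsum_eq_norm_of_nonneg hnonneg, norm_sumElim, norm_smul, norm_smul,
      norm_eq_one_of_mem_fullSimplex hp, norm_eq_one_of_mem_fullSimplex hq, Real.norm_of_nonneg ht0,
      Real.norm_of_nonneg (by linarith)]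
    ring

lemma sumElim_smul_pos_iff {q : ellOne T} {t : ℝ} (ht0 : 0 < t) (ht1 : t < 1) (v : S ⊕ T) :
    0 < sumElim ((1 - t) • p) (t • q) v ↔ 0 < Sum.elim p q v := by
  rcases v with s | s
  · exact mul_pos_iff_of_pos_left (by linarith)
  · exact mul_pos_iff_of_pos_left ht0

end fullSimplex

section Coarse

variable {X Y : Type*} [MetricSpace X] [MetricSpace Y] {f : X → Y}

lemma IsLipschitzLC.hasVariation {l C R ε : ℝ} (hf : IsLipschitzLC l C f) (hl : 0 ≤ l)
    (hε : l * R + C < ε) : HasVariation R ε f := fun x y hxy =>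
  calc dist (f x) (f y) ≤ l * dist x y + C := hf x y
    _ ≤ l * R + C := by gcongr
    _ < ε := hε

lemma HasVariation.isLipschitzLC {l C D : ℝ} (hf : HasVariation (D / l) C f) (hl : 0 < l)
    (hC : 0 ≤ C) (hD : ∀ x y, dist (f x) (f y) ≤ D) : IsLipschitzLC l C f := by
  intro x y
  rcases le_or_gt (dist x y) (D / l) with hxy | hxy
  · linarith [hf x y hxy, mul_nonneg hl.le (dist_nonneg (x := x) (y := y))]
  · linarith [hD x y, (div_lt_iff₀' hl).1 hxy]

end Coarse

theorem propertyA_iff_exists_simplex_map (X : Type u) [MetricSpace X] :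
    PropertyA X ↔ ∀ R ε : ℝ, 0 < R → 0 < ε → ∃ (S : Type u) (f : X → ellOne S),
      (∀ x, f x ∈ fullSimplex S) ∧ HasVariation R ε f ∧
        UniformlyBounded fun s : S => {x | 0 < f x s} := by
  constructor
  · intro hA R ε hR hε
    obtain ⟨M, S, φ, -, hφ01, hφfin, hφsum, hφvar, hφsupp⟩ := hA R ε hR hε
    refine ⟨S, fun x => ofFinite (φ · x) (hφfin x), fun x => ⟨fun s => (hφ01 s x).1, hφfin x,
      hφsum x⟩, fun x y hxy => by simpa [dist_eq_tsum] using hφvar x y hxy, M, ?_⟩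
    exact fun s x hx y hy => hφsupp s x (ne_of_gt hx) y (ne_of_gt hy)
  · intro h R ε hR hε
    obtain ⟨S, f, hfΔ, hfvar, M, hM⟩ := h R ε hR hε
    refine ⟨max M 1, S, fun s x => f x s, by positivity,
      fun s x => ⟨(hfΔ x).1 s, apply_le_one_of_mem_fullSimplex (hfΔ x) s⟩,
      fun x => (hfΔ x).2.1, fun x => (hfΔ x).2.2,
      fun x y hxy => by simpa [dist_eq_tsum] using hfvar x y hxy, ?_⟩
    refine fun s x hx y hy => (hM s x ?_ y ?_).trans (le_max_left M 1)
    · exact ((hfΔ x).1 s).lt_of_ne' hx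
    · exact ((hfΔ y).1 s).lt_of_ne' hy

section BoundedGeometry

variable {X : Type u} [MetricSpace X]

lemma BoundedGeometry.finite_ball (hX : BoundedGeometry X) (x : X) {r : ℝ} (hr : 0 < r) :
    (ball x r).Finite := by
  obtain ⟨N, hN⟩ := hX r hr
  exact Set.encard_lt_top_iff.1 ((hN x).trans_lt (WithTop.coe_lt_top N))

lemma BoundedGeometry.finite_setOf_mem_range {ι : Type*} (hX : BoundedGeometry X)
    {U : ι → Set X} (hU : UniformlyBounded U) (x : X) : {A | A ∈ Set.range U ∧ x ∈ A}.Finite := by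
  obtain ⟨M, hM⟩ := hU
  refine (hX.finite_ball x (r := max M 0 + 1) (by positivity)).finite_subsets.subset ?_
  rintro _ ⟨⟨i, rfl⟩, hx⟩ y hy
  exact mem_ball.2 ((hM i y hy x hx).trans_lt (by linarith [le_max_left M 0]))

lemma BoundedGeometry.exists_simplex_map_pos_iff {ι : Type*} (hX : BoundedGeometry X)
    {U : ι → Set X} (hcover : IsCover U) (hU : UniformlyBounded U) :
    ∃ g : X → ellOne (Set X), (∀ x, g x ∈ fullSimplex (Set X)) ∧
      ∀ x A, 0 < g x A ↔ A ∈ Set.range U ∧ x ∈ A := by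
  choose g hgΔ hgpos using fun x => exists_mem_fullSimplex_pos_iff
    (hX.finite_setOf_mem_range hU x) (let ⟨i, hi⟩ := hcover x; ⟨U i, ⟨i, rfl⟩, hi⟩)
  exact ⟨g, hgΔ, hgpos⟩

end BoundedGeometry

theorem PropertyA.of_lsParacompact {X : Type u} [MetricSpace X] (h : LSParacompact X) :
    PropertyA X := by
  refine (propertyA_iff_exists_simplex_map X).2 fun R ε hR hε => ?_
  obtain ⟨S, K, f, hK, hfK, hf, hstars, -⟩ := h X (fun x => {x}) (fun x => ⟨x, rfl⟩)
    ⟨0, by simp⟩ (ε / (2 * R)) (ε / 4) (by positivity) (by positivity)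
  refine ⟨S, f, fun x => hK.1 (hfK x), hf.hasVariation (by positivity) ?_, ?_⟩
  · have : ε / (2 * R) * R = ε / 2 := by field_simp
    linarith
  · simpa only [preimage_star_eq hfK] using hstars

theorem LSParacompact.of_propertyA {X : Type u} [MetricSpace X] (hX : BoundedGeometry X)
    (hA : PropertyA X) : LSParacompact X := by
  intro ι U hcover hU l C hl hC
  obtain ⟨S, f, hfΔ, hfvar, M, hM⟩ :=
    (propertyA_iff_exists_simplex_map X).1 hA (2 / l) (C / 2) (by positivity) (by positivity)
  obtain ⟨g, hgΔ, hgpos⟩ := hX.exists_simplex_map_pos_iff hcover hU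
  obtain ⟨B, hB⟩ := hU
  set t := min (C / 4) (1 / 2)
  have ht0 : 0 < t := by positivity
  have ht1 : t < 1 := (min_le_right _ _).trans_lt (by norm_num)
  have htC : t ≤ C / 4 := min_le_left _ _
  set F : X → ellOne (S ⊕ Set X) := fun x => sumElim ((1 - t) • f x) (t • g x)
  have hFΔ x : F x ∈ fullSimplex (S ⊕ Set X) :=
    sumElim_smul_mem_fullSimplex (hfΔ x) (hgΔ x) ht0.le ht1.le
  have hFvar : HasVariation (2 / l) C F := fun x y hxy =>
    calc dist (F x) (F y) = (1 - t) * dist (f x) (f y) + t * dist (g x) (g y) := by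
          rw [dist_sumElim, dist_smul₀, dist_smul₀, Real.norm_of_nonneg ht0.le,
            Real.norm_of_nonneg (by linarith)]
      _ ≤ 1 * dist (f x) (f y) + t * 2 := by
          gcongr
          · linarith
          · exact dist_le_two_of_mem_fullSimplex (hgΔ x) (hgΔ y)
      _ < C := by linarith [hfvar x y hxy]
  refine ⟨S ⊕ Set X, fullSimplex _, F, isSimplicialComplex_fullSimplex, hFΔ,
    hFvar.isLipschitzLC hl hC.le fun x y => dist_le_two_of_mem_fullSimplex (hFΔ x) (hFΔ y),
    ⟨max M B, ?_⟩, fun i => ⟨.inr (U i), fun x hx => ⟨hFΔ x, ?_⟩⟩⟩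
  · simp only [preimage_star_eq hFΔ, Set.mem_ofPred_eq, F, sumElim_smul_pos_iff ht0 ht1]
    rintro (s | A) x hx y hy
    · exact (hM s x hx y hy).trans (le_max_left M B)
    · obtain ⟨⟨i, rfl⟩, hx⟩ := (hgpos x _).1 hx
      exact (hB i x hx y ((hgpos y _).1 hy).2).trans (le_max_right M B)
  · exact (sumElim_smul_pos_iff ht0 ht1 _).2 ((hgpos x _).2 ⟨⟨i, rfl⟩, hx⟩)

/-- for a metric space of bounded geometry, Property A is equivalent to
large scale paracompactness. -/
theorem propertyA_iff_lsParacompact (X : Type u) [MetricSpace X]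
    (hX : BoundedGeometry X) : PropertyA X ↔ LSParacompact X :=
  ⟨LSParacompact.of_propertyA hX, PropertyA.of_lsParacompact⟩

end
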